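/- Let A be a groupoid. The set of strict automorphisms F of A for which there exists a natural transformation 𝟭_A ⟹ F is a normal subgroup of the group Aut(A) of strict automorphisms of A under composition of functors. -/

import Mathlib

open CategoryTheory

universe v u

structure GrpdAut (A : Type u) [Groupoid A] where
  F : A ⥤ A
  inv : A ⥤ A
  comp_inv : F ⋙ inv = 𝟭 A
  inv_comp : inv ⋙ F = 𝟭 A

variable {A : Type u} [Groupoid A]

theorem GrpdAut.ext' {f g : GrpdAut A} (h1 : f.F = g.F) (h2 : f.inv = g.inv) :
    f = g := by
  cases f; cases g; cases h1; cases h2; rfl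

/-- The group `Aut(A)` of strict automorphisms of `A` under composition of
functors (written left-to-right). -/
instance : Group (GrpdAut A) where
  mul f g :=
    { F := f.F ⋙ g.F
      inv := g.inv ⋙ f.inv
      comp_inv := by
        rw [Functor.assoc, ← Functor.assoc g.F, g.comp_inv, Functor.id_comp, f.comp_inv]
      inv_comp := by
        rw [Functor.assoc, ← Functor.assoc f.inv, f.inv_comp, Functor.id_comp, g.inv_comp] }
  one := ⟨𝟭 A, 𝟭 A, rfl, rfl⟩
  inv f := ⟨f.inv, f.F, f.inv_comp, f.comp_inv⟩
  mul_assoc _ _ _ := rfl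
  one_mul _ := rfl
  mul_one _ := rfl
  inv_mul_cancel f := GrpdAut.ext' f.inv_comp f.inv_comp

/-! Natural transformations out of the identity compose by whiskering, `σ ≫ F τ : 𝟭 ⟶ F ⋙ G`,
and whiskering `σ : 𝟭 ⟶ N` with an automorphism `G` gives `𝟭 = G ⋙ G⁻¹ ⟶ G ⋙ N ⋙ G⁻¹`.
Closure under inverses is where the groupoid hypothesis enters: `σ : 𝟭 ⟶ F` is invertible, and
whiskering `σ⁻¹` with `F⁻¹` gives `𝟭 = F⁻¹ ⋙ F ⟶ F⁻¹`. -/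

namespace CategoryTheory

variable {C : Type*} [Category C]

theorem nonempty_id_hom_comp {F G : C ⥤ C} (hF : Nonempty (𝟭 C ⟶ F))
    (hG : Nonempty (𝟭 C ⟶ G)) : Nonempty (𝟭 C ⟶ F ⋙ G) := by
  obtain ⟨σ⟩ := hF
  obtain ⟨τ⟩ := hG
  exact ⟨σ ≫ Functor.whiskerLeft F τ⟩

theorem nonempty_id_hom_conj {N : C ⥤ C} (G G' : C ⥤ C) (hGG' : G ⋙ G' = 𝟭 C)
    (hN : Nonempty (𝟭 C ⟶ N)) : Nonempty (𝟭 C ⟶ G ⋙ N ⋙ G') := by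
  obtain ⟨σ⟩ := hN
  exact ⟨eqToHom hGG'.symm ≫ Functor.whiskerRight (Functor.whiskerLeft G σ) G'⟩

theorem nonempty_id_hom_of_comp_eq_id [IsGroupoid C] {F G : C ⥤ C}
    (hGF : G ⋙ F = 𝟭 C) (hF : Nonempty (𝟭 C ⟶ F)) : Nonempty (𝟭 C ⟶ G) := by
  obtain ⟨σ⟩ := hF
  have : IsIso σ := NatIso.isIso_of_isIso_app σ
  exact ⟨eqToHom hGF.symm ≫ Functor.whiskerLeft G (inv σ) ≫ G.rightUnitor.hom⟩

end CategoryTheory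

def GrpdAut.inner (A : Type u) [Groupoid A] : Subgroup (GrpdAut A) where
  carrier := {F | Nonempty (𝟭 A ⟶ F.F)}
  one_mem' := ⟨𝟙 (𝟭 A)⟩
  mul_mem' hf hg := nonempty_id_hom_comp hf hg
  inv_mem' {f} hf := nonempty_id_hom_of_comp_eq_id f.inv_comp hf

instance GrpdAut.inner_normal : (GrpdAut.inner A).Normal where
  conj_mem _ hn g := nonempty_id_hom_conj g.F g.inv g.comp_inv hn

/-- The set of strict automorphisms `F` of `A` admitting a natural
transformation `𝟭_A ⟹ F` is a normal subgroup of `Aut(A)`. -/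
theorem inner_is_normal_subgroup (A : Type u) [Groupoid A] :
    ∃ H : Subgroup (GrpdAut A),
      (∀ F : GrpdAut A, F ∈ H ↔ Nonempty (𝟭 A ⟶ F.F)) ∧ H.Normal :=
  ⟨GrpdAut.inner A, fun _ => Iff.rfl, inferInstance⟩
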